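/- Let n ≥ 2 and let Q ∈ SU_n have eigenvalues μ_1, …, μ_n counted with multiplicity. If ζ(Q) := (1/(2π))·Σ_{j=1}^n arg(μ_j) = 0, then m(Q) = Σ_{j=1}^n (arg(μ_j))². -/

import Mathlib

/-!
Both bounds are read off in an eigenbasis. A skew-hermitian logarithm `X` of `Q` is unitarily
diagonalizable as `diag (i θ_j)`; then the eigenvalues of `Q` are the `exp (i θ_j)`,
`‖X‖_φ² = ∑ θ_j²`, and `|arg (exp (i θ))| ≤ |θ|` gives `m(Q) ≥ ∑ (arg μ_j)²`. Conversely, writing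
the unitary `Q` as `U diag (μ_j) U⁻¹`, the matrix `U diag (i arg μ_j) U⁻¹` is a skew-hermitian
logarithm attaining this bound, and it is traceless precisely because `∑ arg μ_j = 0`.
-/

noncomputable section

open scoped Real Matrix
open Matrix

/-- The special unitary group `SU_n` as a set of matrices: `Q Qᴴ = 1` and `det Q = 1`. -/
def SpecialUnitary (n : ℕ) : Set (Matrix (Fin n) (Fin n) ℂ) :=
  {Q | Q * Qᴴ = 1 ∧ Q.det = 1}

/-- The Lie algebra `su_n`: skew-hermitian traceless matrices. -/
def suSet (n : ℕ) : Set (Matrix (Fin n) (Fin n) ℂ) :=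
  {X | Xᴴ = -X ∧ Matrix.trace X = 0}

/-- The squared Frobenius norm `‖X‖_φ² = trace (X Xᴴ)` (a real number). -/
def frobSq {n : ℕ} (X : Matrix (Fin n) (Fin n) ℂ) : ℝ :=
  (Matrix.trace (X * Xᴴ)).re

/-- `m(Q) = inf { ‖X‖_φ² : X ∈ su_n, exp X = Q }`. -/
def mQ {n : ℕ} (Q : Matrix (Fin n) (Fin n) ℂ) : ℝ :=
  sInf {r : ℝ | ∃ X ∈ suSet n, NormedSpace.exp X = Q ∧ frobSq X = r}

/-- `Θ(Q)`: the set of minimizing `su_n`-logarithms of `Q`. -/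
def ThetaQ {n : ℕ} (Q : Matrix (Fin n) (Fin n) ℂ) : Set (Matrix (Fin n) (Fin n) ℂ) :=
  {X | X ∈ suSet n ∧ NormedSpace.exp X = Q ∧ frobSq X = mQ Q}

/-- `su_n`-plog(Q): generalized principal `su_n`-logarithms of `Q`, i.e. `su_n`-logarithms
all of whose eigenvalues (roots of the characteristic polynomial) have imaginary part
in `[-π, π]`. -/
def plog {n : ℕ} (Q : Matrix (Fin n) (Fin n) ℂ) : Set (Matrix (Fin n) (Fin n) ℂ) :=
  {X | X ∈ suSet n ∧ NormedSpace.exp X = Q ∧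
    ∀ lam ∈ X.charpoly.roots, -π ≤ lam.im ∧ lam.im ≤ π}

theorem LinearMap.IsSymmetric.exists_orthonormalBasis_eigenvectors_of_commute {𝕜 E : Type*}
    [RCLike 𝕜] [NormedAddCommGroup E] [InnerProductSpace 𝕜 E] [FiniteDimensional 𝕜 E] {n : ℕ}
    (hn : Module.finrank 𝕜 E = n) {S T : E →ₗ[𝕜] E} (hS : S.IsSymmetric) (hT : T.IsSymmetric)
    (hST : Commute S T) :
    ∃ (b : OrthonormalBasis (Fin n) 𝕜 E) (α β : Fin n → 𝕜),
      ∀ j, S (b j) = α j • b j ∧ T (b j) = β j • b j := by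
  classical
  let V : 𝕜 × 𝕜 → Submodule 𝕜 E := fun i =>
    Module.End.eigenspace S i.2 ⊓ Module.End.eigenspace T i.1
  have internal := hS.directSum_isInternal_of_commute hT hST
  have : Fintype {i // V i ≠ ⊥} :=
    (Submodule.finite_ne_bot_of_iSupIndep internal.submodule_iSupIndep).fintype
  have orth := (hS.orthogonalFamily_eigenspace_inf_eigenspace hT).comp
    (f := ((↑) : {i // V i ≠ ⊥} → 𝕜 × 𝕜)) Subtype.coe_injective
  have internal' := orth.isInternal_iff.mpr <| by
    rw [iSup_ne_bot_subtype, internal.submodule_iSup_eq_top, Submodule.top_orthogonal_eq_bot]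
  let i j := (internal'.subordinateOrthonormalBasisIndex hn j orth).val
  refine ⟨internal'.subordinateOrthonormalBasis hn orth, fun j => (i j).2, fun j => (i j).1,
    fun j => ?_⟩
  obtain ⟨hSj, hTj⟩ :=
    Submodule.mem_inf.mp (internal'.subordinateOrthonormalBasis_subordinate hn j orth)
  exact ⟨Module.End.mem_eigenspace_iff.mp hSj, Module.End.mem_eigenspace_iff.mp hTj⟩

theorem Complex.abs_arg_exp_le (z : ℂ) : |arg (exp z)| ≤ |z.im| := by
  by_cases h : z.im ∈ Set.Ioc (-π) π
  · rw [arg_exp, (toIocMod_eq_self _).mpr ⟨h.1, by linarith [h.2]⟩]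
  · have hπ : π ≤ |z.im| := by
      rw [Set.mem_Ioc, not_and_or, not_lt, not_le] at h
      exact le_abs'.mpr (h.imp id le_of_lt)
    exact (abs_arg_le_pi _).trans hπ

theorem Finset.sum_comp_eq_of_map_univ_val_eq {ι α M : Type*} [Fintype ι] [AddCommMonoid M]
    {d μ : ι → α} (h : Multiset.map d univ.val = Multiset.map μ univ.val) (f : α → M) :
    ∑ i, f (d i) = ∑ i, f (μ i) := by
  have := congrArg (fun s => (s.map f).sum) h
  simp only [Multiset.map_map] at this
  exact this

namespace Matrix

open Unitary

section UnitaryConj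

variable {ι : Type*} [Fintype ι] [DecidableEq ι]

theorem exists_unitary_conj_diagonal_of_orthonormalBasis {𝕜 : Type*} [RCLike 𝕜]
    {A : Matrix ι ι 𝕜} (b : OrthonormalBasis ι 𝕜 (EuclideanSpace 𝕜 ι)) {d : ι → 𝕜}
    (hb : ∀ j, A *ᵥ ⇑(b j) = d j • ⇑(b j)) :
    ∃ U : unitaryGroup ι 𝕜, A = conjStarAlgAut 𝕜 _ U (diagonal d) := by
  let U : unitaryGroup ι 𝕜 := ⟨(EuclideanSpace.basisFun ι 𝕜).toBasis.toMatrix b.toBasis,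
    (EuclideanSpace.basisFun ι 𝕜).toMatrix_orthonormalBasis_mem_unitary b⟩
  have hU : ∀ j, (U : Matrix ι ι 𝕜) *ᵥ Pi.single j 1 = ⇑(b j) := fun j => by
    rw [mulVec_single_one]; rfl
  have hUstar : ∀ j, star (U : Matrix ι ι 𝕜) *ᵥ ⇑(b j) = Pi.single j 1 := fun j => by
    rw [← hU, mulVec_mulVec, coe_star_mul_self, one_mulVec]
  refine ⟨U, ?_⟩
  rw [← StarAlgEquiv.symm_apply_eq, conjStarAlgAut_symm_apply]
  refine ext_of_mulVec_single fun j => ?_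
  rw [← mulVec_mulVec, hU, ← mulVec_mulVec, hb, mulVec_smul, hUstar, diagonal_mulVec_single,
    ← Pi.single_smul, smul_eq_mul, mul_one]

theorem exists_unitary_conj_diagonal_of_commute_conjTranspose {A : Matrix ι ι ℂ}
    (hA : Commute A Aᴴ) :
    ∃ (U : unitaryGroup ι ℂ) (d : ι → ℂ), A = conjStarAlgAut ℂ _ U (diagonal d) := by
  -- `2 A = S + I T` with commuting hermitian `S` and `T`, which we diagonalize simultaneously.
  set S := A + Aᴴ
  set T := Complex.I • (Aᴴ - A)
  have hS : S.IsHermitian := by simp [S, IsHermitian, add_comm]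
  have hT : T.IsHermitian := by
    simp only [T, IsHermitian, conjTranspose_smul, conjTranspose_sub, conjTranspose_conjTranspose,
      Complex.star_def, Complex.conj_I]
    module
  have hST : Commute S T :=
    ((hA.add_left (.refl _)).sub_right ((Commute.refl A).add_left hA.symm)).smul_right _
  have hA2 : A = (2 : ℂ)⁻¹ • (S + Complex.I • T) := by
    simp only [S, T, smul_smul, Complex.I_mul_I]
    module
  obtain ⟨b, α, β, hb⟩ :=
    (isSymmetric_toEuclideanLin_iff.mpr hS).exists_orthonormalBasis_eigenvectors_of_commute
      finrank_euclideanSpace (isSymmetric_toEuclideanLin_iff.mpr hT) (hST.map (toLpLinAlgEquiv 2))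
  let e := Fintype.equivFin ι
  refine ⟨_, fun i => (α (e i) + Complex.I * β (e i)) / 2,
    (exists_unitary_conj_diagonal_of_orthonormalBasis (b.reindex e.symm) fun j => ?_).choose_spec⟩
  have hSj := congrArg WithLp.ofLp (hb (e j)).1
  have hTj := congrArg WithLp.ofLp (hb (e j)).2
  simp only [ofLp_toLpLin, toLin'_apply, WithLp.ofLp_smul] at hSj hTj
  rw [OrthonormalBasis.reindex_apply, Equiv.symm_symm, hA2, smul_mulVec, add_mulVec,
    smul_mulVec, hSj, hTj]
  match_scalars
  ring

theorem diagonal_mem_unitaryGroup_iff {α : Type*} [CommRing α] [StarRing α] {d : ι → α} :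
    diagonal d ∈ unitaryGroup ι α ↔ ∀ i, d i ∈ unitary α := by
  simp [mem_unitaryGroup_iff, Unitary.mem_iff_self_mul_star, star_eq_conjTranspose,
    ← diagonal_one]

theorem roots_charpoly_diagonal {R : Type*} [CommRing R] [IsDomain R] (d : ι → R) :
    (diagonal d).charpoly.roots = Multiset.map d Finset.univ.val := by
  rw [charpoly_diagonal, Polynomial.roots_prod]
  · simp
  · simp [Finset.prod_ne_zero_iff, Polynomial.X_sub_C_ne_zero]

theorem exp_diagonal_eq_diagonal_cexp (v : ι → ℂ) :
    NormedSpace.exp (diagonal v) = diagonal fun i => Complex.exp (v i) := by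
  rw [exp_diagonal, Pi.exp_def, Complex.exp_eq_exp_ℂ]

theorem exp_conjStarAlgAut {𝕜 : Type*} [RCLike 𝕜] (U : unitaryGroup ι 𝕜) (M : Matrix ι ι 𝕜) :
    NormedSpace.exp (conjStarAlgAut 𝕜 _ U M) = conjStarAlgAut 𝕜 _ U (NormedSpace.exp M) :=
  exp_units_conj (toUnits U) M

variable {R : Type*} [CommRing R] [StarRing R] (U : unitaryGroup ι R) (M : Matrix ι ι R)

theorem charpoly_conjStarAlgAut : (conjStarAlgAut R _ U M).charpoly = M.charpoly := by
  rw [conjStarAlgAut_apply, charpoly_mul_comm, ← mul_assoc, coe_star_mul_self, one_mul]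

theorem trace_conjStarAlgAut : (conjStarAlgAut R _ U M).trace = M.trace := by
  rw [conjStarAlgAut_apply, trace_mul_cycle, coe_star_mul_self, one_mul]

end UnitaryConj

variable {n : ℕ}

theorem frobSq_conjStarAlgAut (U : unitaryGroup (Fin n) ℂ) (M : Matrix (Fin n) (Fin n) ℂ) :
    frobSq (conjStarAlgAut ℂ _ U M) = frobSq M := by
  simp only [frobSq, ← star_eq_conjTranspose, ← map_star, ← map_mul, trace_conjStarAlgAut]

theorem frobSq_diagonal (v : Fin n → ℂ) : frobSq (diagonal v) = ∑ i, Complex.normSq (v i) := by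
  simp [frobSq, Complex.mul_conj, Complex.re_sum]

end Matrix

open Unitary

theorem sum_sq_arg_le_frobSq {n : ℕ} {X Q : Matrix (Fin n) (Fin n) ℂ} {μ : Fin n → ℂ}
    (hX : Xᴴ = -X) (hXQ : NormedSpace.exp X = Q)
    (hμ : Q.charpoly.roots = Multiset.map μ Finset.univ.val) :
    ∑ j, (μ j).arg ^ 2 ≤ frobSq X := by
  obtain ⟨U, v, rfl⟩ :=
    exists_unitary_conj_diagonal_of_commute_conjTranspose (hX ▸ (Commute.refl X).neg_right)
  have hv : ∀ i, (v i).re = 0 := fun i => by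
    rw [← star_eq_conjTranspose, ← map_star, ← map_neg, EmbeddingLike.apply_eq_iff_eq,
      star_eq_conjTranspose, diagonal_conjTranspose, diagonal_neg,
      diagonal_injective.eq_iff] at hX
    have := congrArg Complex.re (congrFun hX i)
    simp only [Pi.star_apply, Complex.star_def, Complex.conj_re, Complex.neg_re] at this
    linarith
  rw [← hXQ, exp_conjStarAlgAut, exp_diagonal_eq_diagonal_cexp, charpoly_conjStarAlgAut,
    roots_charpoly_diagonal] at hμ
  calc ∑ j, (μ j).arg ^ 2 = ∑ i, (Complex.exp (v i)).arg ^ 2 :=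
        (Finset.sum_comp_eq_of_map_univ_val_eq hμ fun z => z.arg ^ 2).symm
    _ ≤ ∑ i, Complex.normSq (v i) := Finset.sum_le_sum fun i _ => by
        rw [Complex.normSq_apply, hv i, zero_mul, zero_add, ← sq]
        exact sq_le_sq.mpr (Complex.abs_arg_exp_le _)
    _ = frobSq (conjStarAlgAut ℂ _ U (diagonal v)) := by
        rw [frobSq_conjStarAlgAut, frobSq_diagonal]

theorem exists_mem_suSet_exp_eq_frobSq_eq {n : ℕ} {Q : Matrix (Fin n) (Fin n) ℂ} {μ : Fin n → ℂ}
    (hQ : Q * Qᴴ = 1) (hμ : Q.charpoly.roots = Multiset.map μ Finset.univ.val)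
    (hζ : ∑ j, (μ j).arg = 0) :
    ∃ X ∈ suSet n, NormedSpace.exp X = Q ∧ frobSq X = ∑ j, (μ j).arg ^ 2 := by
  have hQU : Q ∈ unitaryGroup (Fin n) ℂ := mem_unitaryGroup_iff.mpr hQ
  obtain ⟨U, d, rfl⟩ := exists_unitary_conj_diagonal_of_commute_conjTranspose
    (hQ.trans (mem_unitaryGroup_iff'.mp hQU).symm)
  rw [charpoly_conjStarAlgAut, roots_charpoly_diagonal] at hμ
  have hd : ∀ i, ‖d i‖ = 1 := by
    have : diagonal d ∈ unitaryGroup (Fin n) ℂ := by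
      rw [← (conjStarAlgAut ℂ _ U).symm_apply_apply (diagonal d), conjStarAlgAut_symm_apply]
      exact mul_mem (mul_mem (Unitary.star_mem U.2) hQU) U.2
    exact fun i => CStarRing.norm_of_mem_unitary (diagonal_mem_unitaryGroup_iff.mp this i)
  let v : Fin n → ℂ := fun i => (d i).arg * Complex.I
  refine ⟨conjStarAlgAut ℂ _ U (diagonal v), ⟨?skew, ?traceless⟩, ?exp, ?frobSq⟩
  case skew =>
    rw [← star_eq_conjTranspose, ← map_star, ← map_neg, star_eq_conjTranspose,
      diagonal_conjTranspose, diagonal_neg]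
    congr 2
    ext i
    simp [v]
  case traceless =>
    rw [trace_conjStarAlgAut, trace_diagonal, ← Finset.sum_mul, ← Complex.ofReal_sum,
      Finset.sum_comp_eq_of_map_univ_val_eq hμ, hζ, Complex.ofReal_zero, zero_mul]
  case exp =>
    rw [exp_conjStarAlgAut, exp_diagonal_eq_diagonal_cexp]
    congr 2
    ext i
    simpa [hd i] using Complex.norm_mul_exp_arg_mul_I (d i)
  case frobSq =>
    rw [frobSq_conjStarAlgAut, frobSq_diagonal,
      ← Finset.sum_comp_eq_of_map_univ_val_eq hμ fun z => z.arg ^ 2]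
    simp [v, Complex.normSq_mul, sq]

theorem stmt_8_general (n : ℕ) (Q : Matrix (Fin n) (Fin n) ℂ)
    (hQ : Q ∈ SpecialUnitary n) (μ : Fin n → ℂ)
    (hμ : Q.charpoly.roots = Multiset.map μ Finset.univ.val)
    (hζ : (∑ j, (μ j).arg) = 0) :
    mQ Q = ∑ j, ((μ j).arg) ^ 2 := by
  obtain ⟨X, hX, hXQ, hXfrob⟩ := exists_mem_suSet_exp_eq_frobSq_eq hQ.1 hμ hζ
  refine IsLeast.csInf_eq ⟨⟨X, hX, hXQ, hXfrob⟩, ?_⟩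
  rintro _ ⟨Y, hY, hYQ, rfl⟩
  exact sum_sq_arg_le_frobSq hY.1 hYQ hμ

/-- if `ζ(Q) = 0` then `m(Q) = Σ (arg μ_j)²`. -/
theorem stmt_8 (n : ℕ) (hn : 2 ≤ n) (Q : Matrix (Fin n) (Fin n) ℂ)
    (hQ : Q ∈ SpecialUnitary n) (μ : Fin n → ℂ)
    (hμ : Q.charpoly.roots = Multiset.map μ Finset.univ.val)
    (hζ : (∑ j, (μ j).arg) = 0) :
    mQ Q = ∑ j, ((μ j).arg) ^ 2 :=
  stmt_8_general n Q hQ μ hμ hζ
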